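/- arXiv:2206.00329 — 2 statements merged into one kernel-verified Lean document; each statement's English description precedes it below -/
import Mathlib

section
/- Suppose for all z > 0 we have z²(φ̂_z)² < μκ (so F(z) < 0 for all z > 0, with F as in the stability analysis). Then for every wave vector k ∈ ℝ², k ≠ 0, the Routh–Hurwitz quantities satisfy: (i) G(|k|)|k|²γ_s − F(|k|) > 0, and (ii) H(k) = [G|k|²γ_s − F]²d₁d₃k₁² − γ_s F |k|²[(d₁ − d₂G)²k₀² + (G|k|²γ_s − F)²] > 0 whenever d₁, d₃ > 0 and either k₁ ≠ 0 or F < 0. -/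
theorem stmt_11 (ρ₀ ζ κ η μ γs d₁ d₂ d₃ : ℝ)
    (hρ : 0 < ρ₀) (hζ : 0 < ζ) (hκ : 0 < κ) (hη : 0 < η) (hμ : 0 < μ)
    (hγs : 0 < γs) (hd₁ : 0 < d₁) (hd₂ : 0 < d₂) (hd₃ : 0 < d₃)
    (phat : ℝ → ℝ)
    (hstab : ∀ z > 0, z ^ 2 * (phat z) ^ 2 < μ * κ)
    (F G : ℝ → ℝ)
    (hF : ∀ z, F z = z ^ 2 * (ρ₀ / ζ) * ((1 / κ) * z ^ 2 * (phat z) ^ 2 - μ))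
    (hG : ∀ z, G z = 1 + ρ₀ * (η / (κ ^ 2 * ζ)) * z ^ 4 * (phat z) ^ 2) :
    ∀ k₀ k₁ : ℝ, 0 < k₀ ^ 2 + k₁ ^ 2 →
      (0 < G (Real.sqrt (k₀ ^ 2 + k₁ ^ 2)) * (k₀ ^ 2 + k₁ ^ 2) * γs
            - F (Real.sqrt (k₀ ^ 2 + k₁ ^ 2))) ∧
      ((k₁ ≠ 0 ∨ F (Real.sqrt (k₀ ^ 2 + k₁ ^ 2)) < 0) →
        0 < (G (Real.sqrt (k₀ ^ 2 + k₁ ^ 2)) * (k₀ ^ 2 + k₁ ^ 2) * γs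
              - F (Real.sqrt (k₀ ^ 2 + k₁ ^ 2))) ^ 2 * d₁ * d₃ * k₁ ^ 2
            - γs * F (Real.sqrt (k₀ ^ 2 + k₁ ^ 2)) * (k₀ ^ 2 + k₁ ^ 2) *
              ((d₁ - d₂ * G (Real.sqrt (k₀ ^ 2 + k₁ ^ 2))) ^ 2 * k₀ ^ 2
                + (G (Real.sqrt (k₀ ^ 2 + k₁ ^ 2)) * (k₀ ^ 2 + k₁ ^ 2) * γs
                    - F (Real.sqrt (k₀ ^ 2 + k₁ ^ 2))) ^ 2)) := by
  intro k₀ k₁ hk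
  set z : ℝ := Real.sqrt (k₀ ^ 2 + k₁ ^ 2) with hzdef
  have hz : 0 < z := Real.sqrt_pos.mpr hk
  have hz2 : z ^ 2 = k₀ ^ 2 + k₁ ^ 2 := Real.sq_sqrt hk.le
  have hFz : F z < 0 := by
    rw [hF z]
    have hst := hstab z hz
    have hκ' : (0:ℝ) < 1 / κ := by positivity
    have h1 : (1 / κ) * z ^ 2 * (phat z) ^ 2 - μ < 0 := by
      have h := mul_lt_mul_of_pos_left hst hκ'
      have : (1 / κ) * (μ * κ) = μ := by field_simp
      nlinarith
    have hpos : 0 < z ^ 2 * (ρ₀ / ζ) := by positivity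
    exact mul_neg_of_pos_of_neg hpos h1
  have hGz : 0 < G z := by
    rw [hG z]
    positivity
  have hB : 0 < G z * (k₀ ^ 2 + k₁ ^ 2) * γs - F z := by
    have : 0 < G z * (k₀ ^ 2 + k₁ ^ 2) * γs := by positivity
    linarith
  refine ⟨hB, fun _ => ?_⟩
  have h1 : 0 ≤ (G z * (k₀ ^ 2 + k₁ ^ 2) * γs - F z) ^ 2 * d₁ * d₃ * k₁ ^ 2 := by positivity
  have h2 : 0 < (d₁ - d₂ * G z) ^ 2 * k₀ ^ 2 + (G z * (k₀ ^ 2 + k₁ ^ 2) * γs - F z) ^ 2 := by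
    have := sq_nonneg ((d₁ - d₂ * G z)) 
    nlinarith [sq_nonneg ((d₁ - d₂ * G z) * k₀)]
  nlinarith [mul_pos hγs hk, mul_pos (mul_pos hγs hk) h2]
end

section
/- In the limit κ → ∞ (pillar obstacles), any constant state (ρ₀, Ω₀) with ρ₀ > 0, Ω₀ ∈ 𝕊¹ is linearly stable for the continuum system: for every k ∈ ℝ², k ≠ 0, all dispersion roots α of the linearized system with G ≡ 1 and F ≡ −(ρ₀μ/ζ)|k|² have Re(α) ≤ 0, with strict negativity when γ_s > 0 and μ > 0. -/
set_option maxHeartbeats 1600000 in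
/-- Pillar obstacle limit κ → ∞: with G ≡ 1 and F = −(ρ₀μ/ζ)|k|², every
dispersion root of the linearized system has negative real part for every
nonzero wave vector. -/
theorem stmt_16 (ρ₀ μ ζ γs d₁ d₂ d₃ : ℝ)
    (hρ : 0 < ρ₀) (hμ : 0 < μ) (hζ : 0 < ζ) (hγs : 0 < γs)
    (hd₁ : 0 < d₁) (hd₂ : 0 < d₂) (hd₃ : 0 < d₃) :
    ∀ k₀ k₁ : ℝ, 0 < k₀ ^ 2 + k₁ ^ 2 →
      (k₁ = 0 →
        ((-Complex.I * ((d₁ * k₀ : ℝ) : ℂ)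
            + ((-(ρ₀ * μ / ζ) * k₀ ^ 2 : ℝ) : ℂ)).re < 0 ∧
         (-Complex.I * ((d₂ * k₀ : ℝ) : ℂ)
            - (((k₀ ^ 2 + k₁ ^ 2) * γs : ℝ) : ℂ)).re < 0)) ∧
      (k₁ ≠ 0 → ∀ α : ℂ,
        (α - ((-(ρ₀ * μ / ζ) * (k₀ ^ 2 + k₁ ^ 2) : ℝ) : ℂ)
            + Complex.I * (d₁ : ℂ) * (k₀ : ℂ)) *
          (α + Complex.I * (d₂ : ℂ) * (k₀ : ℂ)
            + (((k₀ ^ 2 + k₁ ^ 2) * γs : ℝ) : ℂ))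
          + (d₁ : ℂ) * (d₃ : ℂ) * (k₁ : ℂ) ^ 2 = 0 → α.re < 0) := by
  intro k₀ k₁ hk
  have hμζ : 0 < ρ₀ * μ / ζ := by positivity
  constructor
  · intro hk1
    have hk0 : 0 < k₀ ^ 2 := by nlinarith [sq_nonneg k₁]
    constructor
    · simp only [Complex.add_re, Complex.mul_re, Complex.neg_re, Complex.neg_im,
        Complex.I_re, Complex.I_im, Complex.ofReal_re, Complex.ofReal_im]
      nlinarith
    · simp only [Complex.sub_re, Complex.mul_re, Complex.neg_re, Complex.neg_im,
        Complex.I_re, Complex.I_im, Complex.ofReal_re, Complex.ofReal_im]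
      nlinarith
  · intro hk1 α heq
    by_contra hxc
    push_neg at hxc
    set x := α.re with hxdef
    set y := α.im with hydef
    have hre := congrArg Complex.re heq
    have him := congrArg Complex.im heq
    simp only [← Complex.ofReal_pow, Complex.add_re, Complex.add_im,
      Complex.sub_re, Complex.sub_im, Complex.mul_re, Complex.mul_im,
      Complex.I_re, Complex.I_im, Complex.ofReal_re, Complex.ofReal_im,
      Complex.zero_re, Complex.zero_im] at hre him
    obtain ⟨a, hadef⟩ : ∃ a : ℝ, a = ρ₀ * μ / ζ * (k₀ ^ 2 + k₁ ^ 2) := ⟨_, rfl⟩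
    obtain ⟨b, hbdef⟩ : ∃ b : ℝ, b = (k₀ ^ 2 + k₁ ^ 2) * γs := ⟨_, rfl⟩
    have ha : 0 < a := by rw [hadef]; positivity
    have hb : 0 < b := by rw [hbdef]; positivity
    have hc : 0 < d₁ * d₃ * k₁ ^ 2 := by positivity
    have hua : 0 < x + a := by linarith
    have hub : 0 < x + b := by linarith
    have hre' : (x + a) * (x + b) - (y + d₁ * k₀) * (y + d₂ * k₀)
        + d₁ * d₃ * k₁ ^ 2 = 0 := by
      rw [hadef, hbdef]; linear_combination hre
    have him' : (x + a) * (y + d₂ * k₀) + (x + b) * (y + d₁ * k₀) = 0 := by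
      rw [hadef, hbdef]; linear_combination him
    have h1 : (x + a) * (y + d₂ * k₀) = -((x + b) * (y + d₁ * k₀)) := by
      linarith
    have h2 : (y + d₁ * k₀) * (y + d₂ * k₀)
        = (x + a) * (x + b) + d₁ * d₃ * k₁ ^ 2 := by linarith
    have h3 : 0 < (y + d₁ * k₀) * (y + d₂ * k₀) := by
      nlinarith [mul_pos hua hub]
    have h4 : (x + a) * (x + b) * ((y + d₁ * k₀) * (y + d₂ * k₀))
        = -((x + b) * (y + d₁ * k₀)) ^ 2 := by
      linear_combination ((x + b) * (y + d₁ * k₀)) * h1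
    nlinarith [mul_pos (mul_pos hua hub) h3, sq_nonneg ((x + b) * (y + d₁ * k₀))]
end
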